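/- arXiv:2410.10578 — 5 statements merged into one kernel-verified Lean document; each statement's English description precedes it below -/
import Mathlib

section
/- Let (Ω, P) be a probability space, let X : Ω → ℝ be an integrable random variable, let τ ∈ (0, 1), and let q ∈ ℝ satisfy P(X ≤ q) = τ and P(X = q) = 0. Then ∫ ( q − (1/τ) · max(q − X(ω), 0) ) dP(ω) = (1/τ) · ∫_{ {ω : X(ω) ≤ q} } X(ω) dP(ω). -/
open MeasureTheory

lemma max_sub_zero_eq_indicator {Ω : Type*} (X : Ω → ℝ) (q : ℝ) (ω : Ω) :
    max (q - X ω) 0 = {ω | X ω ≤ q}.indicator (fun ω => q - X ω) ω := by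
  rw [Set.indicator_apply]
  split_ifs with hle
  · exact max_eq_left (sub_nonneg.mpr hle)
  · exact max_eq_right (sub_nonpos.mpr (not_le.mp hle).le)

lemma integral_max_sub_zero_eq {Ω : Type*} [MeasurableSpace Ω] (μ : Measure Ω)
    [IsFiniteMeasure μ] (X : Ω → ℝ) (hX : Integrable X μ) (q : ℝ) :
    ∫ ω, max (q - X ω) 0 ∂μ = μ.real {ω | X ω ≤ q} * q - ∫ ω in {ω | X ω ≤ q}, X ω ∂μ := by
  have hs : NullMeasurableSet {ω | X ω ≤ q} μ :=
    hX.aemeasurable.nullMeasurable measurableSet_Iic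
  simp_rw [max_sub_zero_eq_indicator X q]
  rw [integral_indicator₀ hs, integral_sub (integrable_const q) hX.integrableOn,
    setIntegral_const, smul_eq_mul]

theorem extended_reward_mean_is_cvar_general
    {Ω : Type*} [MeasurableSpace Ω] (P : Measure Ω) [IsProbabilityMeasure P]
    (X : Ω → ℝ) (hX : Integrable X P)
    (τ : ℝ) (hτ : τ ∈ Set.Ioo (0 : ℝ) 1)
    (q : ℝ) (hq : P {ω | X ω ≤ q} = ENNReal.ofReal τ) :
    ∫ ω, (q - (1 / τ) * max (q - X ω) 0) ∂P
      = (1 / τ) * ∫ ω in {ω | X ω ≤ q}, X ω ∂P := by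
  have hPs : P.real {ω | X ω ≤ q} = τ := by
    rw [measureReal_def, hq, ENNReal.toReal_ofReal hτ.1.le]
  have hmax : Integrable (fun ω => max (q - X ω) 0) P :=
    ((integrable_const q).sub hX).pos_part
  rw [integral_sub (integrable_const q) (hmax.const_mul _), integral_const_mul,
    integral_max_sub_zero_eq P X hX q, hPs, integral_const, probReal_univ, one_smul]
  field_simp [hτ.1.ne']
  ring

theorem extended_reward_mean_is_cvar
    {Ω : Type*} [MeasurableSpace Ω] (P : Measure Ω) [IsProbabilityMeasure P]
    (X : Ω → ℝ) (hX : Integrable X P)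
    (τ : ℝ) (hτ : τ ∈ Set.Ioo (0 : ℝ) 1)
    (q : ℝ) (hq : P {ω | X ω ≤ q} = ENNReal.ofReal τ)
    (hq0 : P {ω | X ω = q} = 0) :
    ∫ ω, (q - (1 / τ) * max (q - X ω) 0) ∂P
      = (1 / τ) * ∫ ω in {ω | X ω ≤ q}, X ω ∂P :=
  extended_reward_mean_is_cvar_general P X hX τ hτ q hq
end

section
/- Let (Ω, P) be a probability space, let X : Ω → ℝ be an integrable random variable, let τ ∈ (0, 1), and let q ∈ ℝ satisfy P(X < q) ≤ τ and τ ≤ P(X ≤ q). Then for every y ∈ ℝ, ∫ ( y − (1/τ) · max(y − X(ω), 0) ) dP(ω) ≤ ∫ ( q − (1/τ) · max(q − X(ω), 0) ) dP(ω). -/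
open MeasureTheory

theorem ru_helper
    {Ω : Type*} [MeasurableSpace Ω] (P : Measure Ω) [IsProbabilityMeasure P]
    (X : Ω → ℝ) (hX : Integrable X P) (hXm : Measurable X)
    (τ : ℝ) (hτ : τ ∈ Set.Ioo (0 : ℝ) 1)
    (q : ℝ) (hq1 : (P {ω | X ω < q}).toReal ≤ τ)
    (hq2 : τ ≤ (P {ω | X ω ≤ q}).toReal) :
    ∀ y : ℝ,
      ∫ ω, (y - (1 / τ) * max (y - X ω) 0) ∂P
        ≤ ∫ ω, (q - (1 / τ) * max (q - X ω) 0) ∂P := by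
  intro y
  have hτ0 : 0 < τ := hτ.1
  have hint : ∀ z : ℝ, Integrable (fun ω => max (z - X ω) 0) P :=
    fun z => ((integrable_const z).sub hX).pos_part
  have hrw : ∀ z : ℝ, ∫ ω, (z - (1 / τ) * max (z - X ω) 0) ∂P
      = z - (1 / τ) * ∫ ω, max (z - X ω) 0 ∂P := by
    intro z
    rw [integral_sub (integrable_const z) ((hint z).const_mul _), integral_const,
      integral_const_mul]
    simp
  rw [hrw y, hrw q]
  set F := ∫ ω, max (y - X ω) 0 ∂P with hF
  set G := ∫ ω, max (q - X ω) 0 ∂P with hG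
  have key : τ * (y - q) ≤ F - G := by
    rcases le_total q y with hyq | hyq
    · -- use S = {X ≤ q}
      set S : Set Ω := {ω | X ω ≤ q} with hS
      have hSm : MeasurableSet S := measurableSet_le hXm measurable_const
      have hpt : ∀ ω, S.indicator (fun _ => y - q) ω
          ≤ max (y - X ω) 0 - max (q - X ω) 0 := by
        intro ω
        by_cases h : X ω ≤ q
        · rw [Set.indicator_of_mem (show ω ∈ S from h),
            max_eq_left (by linarith : (0:ℝ) ≤ y - X ω),
            max_eq_left (by linarith : (0:ℝ) ≤ q - X ω)]
          linarith
        · rw [Set.indicator_of_notMem (show ω ∉ S from h),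
            max_eq_right (by linarith : q - X ω ≤ 0)]
          simp
      have hmono : ∫ ω, S.indicator (fun _ => y - q) ω ∂P ≤ ∫ ω, (max (y - X ω) 0 - max (q - X ω) 0) ∂P :=
        integral_mono ((integrable_const (y - q)).indicator hSm)
          ((hint y).sub (hint q)) hpt
      rw [integral_indicator_const _ hSm, integral_sub (hint y) (hint q)] at hmono
      have h1 : τ * (y - q) ≤ (P S).toReal * (y - q) :=
        mul_le_mul_of_nonneg_right hq2 (by linarith)
      simp only [smul_eq_mul] at hmono
      calc τ * (y - q) ≤ (P S).toReal * (y - q) := h1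
        _ ≤ F - G := hmono
    · -- use S = {X < q}
      set S : Set Ω := {ω | X ω < q} with hS
      have hSm : MeasurableSet S := measurableSet_lt hXm measurable_const
      have hpt : ∀ ω, S.indicator (fun _ => y - q) ω
          ≤ max (y - X ω) 0 - max (q - X ω) 0 := by
        intro ω
        by_cases h : X ω < q
        · rw [Set.indicator_of_mem (show ω ∈ S from h),
            max_eq_left (by linarith : (0:ℝ) ≤ q - X ω)]
          have := le_max_left (y - X ω) (0:ℝ)
          linarith
        · rw [Set.indicator_of_notMem (show ω ∉ S from h),
            max_eq_right (by linarith : q - X ω ≤ 0)]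
          simp
      have hmono : ∫ ω, S.indicator (fun _ => y - q) ω ∂P ≤ ∫ ω, (max (y - X ω) 0 - max (q - X ω) 0) ∂P :=
        integral_mono ((integrable_const (y - q)).indicator hSm)
          ((hint y).sub (hint q)) hpt
      rw [integral_indicator_const _ hSm, integral_sub (hint y) (hint q)] at hmono
      have h1 : τ * (y - q) ≤ (P S).toReal * (y - q) := by
        apply mul_le_mul_of_nonpos_right hq1 (by linarith)
      simp only [smul_eq_mul] at hmono
      calc τ * (y - q) ≤ (P S).toReal * (y - q) := h1
        _ ≤ F - G := hmono
  have h2 : y - q ≤ (F - G) / τ := by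
    rw [le_div_iff₀ hτ0]; linarith
  have h3 : (F - G) / τ = (1 / τ) * F - (1 / τ) * G := by ring
  linarith

theorem rockafellar_uryasev_optimality_at_quantile
    {Ω : Type*} [MeasurableSpace Ω] (P : Measure Ω) [IsProbabilityMeasure P]
    (X : Ω → ℝ) (hX : Integrable X P)
    (τ : ℝ) (hτ : τ ∈ Set.Ioo (0 : ℝ) 1)
    (q : ℝ) (hq1 : (P {ω | X ω < q}).toReal ≤ τ)
    (hq2 : τ ≤ (P {ω | X ω ≤ q}).toReal) :
    ∀ y : ℝ,
      ∫ ω, (y - (1 / τ) * max (y - X ω) 0) ∂P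
        ≤ ∫ ω, (q - (1 / τ) * max (q - X ω) 0) ∂P := by
  set X' : Ω → ℝ := hX.1.mk X with hX'
  have hXm : Measurable X' := hX.1.measurable_mk
  have hae : X =ᵐ[P] X' := hX.1.ae_eq_mk
  have hX'int : Integrable X' P := hX.congr hae
  have hmeas_lt : P {ω | X' ω < q} = P {ω | X ω < q} := by
    apply measure_congr
    rw [Filter.eventuallyEq_set]
    exact hae.mono fun ω h => by simp [Set.mem_setOf_eq, h]
  have hmeas_le : P {ω | X' ω ≤ q} = P {ω | X ω ≤ q} := by
    apply measure_congr
    rw [Filter.eventuallyEq_set]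
    exact hae.mono fun ω h => by simp [Set.mem_setOf_eq, h]
  have hq1' : (P {ω | X' ω < q}).toReal ≤ τ := by rw [hmeas_lt]; exact hq1
  have hq2' : τ ≤ (P {ω | X' ω ≤ q}).toReal := by rw [hmeas_le]; exact hq2
  intro y
  have e1 : ∫ ω, (y - (1 / τ) * max (y - X ω) 0) ∂P
      = ∫ ω, (y - (1 / τ) * max (y - X' ω) 0) ∂P :=
    integral_congr_ae (hae.mono fun ω h => by simp only [h])
  have e2 : ∫ ω, (q - (1 / τ) * max (q - X ω) 0) ∂P
      = ∫ ω, (q - (1 / τ) * max (q - X' ω) 0) ∂P :=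
    integral_congr_ae (hae.mono fun ω h => by simp only [h])
  rw [e1, e2]
  exact ru_helper P X' hX'int hXm τ hτ q hq1' hq2' y
end

section
/- Let (Ω, P) be a probability space, let X : Ω → ℝ be an integrable random variable whose cumulative distribution function F(x) = P(X ≤ x) is continuous on ℝ and strictly monotone (strictly increasing), let τ ∈ (0, 1), and let q ∈ ℝ satisfy F(q) = τ. Define h(y) = ∫ ( y − (1/τ) · max(y − X(ω), 0) ) dP(ω). If v ∈ ℝ satisfies h(v) = h(q), then v = q. -/
/-! Write `μ` for the law of `X`. Pointwise `(v - x)⁺ - (q - x)⁺ ≥ (v - q) · 1{x ≤ q}`, so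
`y ↦ ∫ (y - x)⁺ dμ` has subgradient `μ(-∞, q] = τ` at `q`, i.e. `h v ≤ h q`. Equality forces the
nonnegative gap in the pointwise inequality to vanish `μ`-a.e.; but the gap is positive strictly
between `q` and `v`, an interval of positive mass because the CDF is strictly increasing. -/

open MeasureTheory ProbabilityTheory Set

lemma indicator_le_max_sub_max (q v x : ℝ) :
    (Iic q).indicator (fun _ => v - q) x ≤ max (v - x) 0 - max (q - x) 0 := by
  by_cases hx : x ≤ q
  · rw [indicator_of_mem (mem_Iic.2 hx), max_eq_left (sub_nonneg.2 hx)]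
    linarith [le_max_left (v - x) 0]
  · rw [indicator_of_notMem (notMem_Iic.2 (not_le.1 hx)),
      max_eq_right (a := q - x) (by linarith [not_le.1 hx])]
    linarith [le_max_right (v - x) 0]

lemma indicator_lt_max_sub_max {q v x : ℝ} (hx : x ∈ uIoo q v) :
    (Iic q).indicator (fun _ => v - q) x < max (v - x) 0 - max (q - x) 0 := by
  rcases le_total q v with hqv | hvq
  · rw [uIoo_of_le hqv] at hx
    rw [indicator_of_notMem (notMem_Iic.2 hx.1), max_eq_left (by linarith [hx.2]),
      max_eq_right (by linarith [hx.1])]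
    linarith [hx.2]
  · rw [uIoo_of_ge hvq] at hx
    rw [indicator_of_mem (mem_Iic.2 hx.2.le), max_eq_right (a := v - x) (by linarith [hx.1]),
      max_eq_left (a := q - x) (by linarith [hx.2])]
    linarith [hx.1]

noncomputable def ruObjective (μ : Measure ℝ) (τ y : ℝ) : ℝ :=
  ∫ x, (y - (1 / τ) * max (y - x) 0) ∂μ

section

variable {μ : Measure ℝ}

lemma integrable_max_const_sub [IsFiniteMeasure μ] (hμ : Integrable id μ) (y : ℝ) :
    Integrable (fun x => max (y - x) 0) μ :=
  ((integrable_const y).sub hμ).pos_part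

lemma integral_const_sub_mul_max [IsProbabilityMeasure μ] (hμ : Integrable id μ) (c y : ℝ) :
    ∫ x, (y - c * max (y - x) 0) ∂μ = y - c * ∫ x, max (y - x) 0 ∂μ := by
  rw [integral_sub (integrable_const y) ((integrable_max_const_sub hμ y).const_mul c),
    integral_const_mul, integral_const, probReal_univ, one_smul]

lemma measure_uIoo_eq_zero_of_integral_max_sub_max_eq [IsFiniteMeasure μ] (hμ : Integrable id μ)
    {q v : ℝ} (heq : ∫ x, max (v - x) 0 ∂μ - ∫ x, max (q - x) 0 ∂μ = (v - q) * μ.real (Iic q)) :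
    μ (uIoo q v) = 0 := by
  have hdiff : Integrable (fun x => max (v - x) 0 - max (q - x) 0) μ :=
    (integrable_max_const_sub hμ v).sub (integrable_max_const_sub hμ q)
  have hind : Integrable ((Iic q).indicator fun _ => v - q) μ :=
    (integrable_const (v - q)).indicator measurableSet_Iic
  set g : ℝ → ℝ := fun x => max (v - x) 0 - max (q - x) 0 - (Iic q).indicator (fun _ => v - q) x
  have hg_zero : ∫ x, g x ∂μ = 0 := by
    rw [integral_sub hdiff hind,
      integral_sub (integrable_max_const_sub hμ v) (integrable_max_const_sub hμ q),
      integral_indicator_const _ measurableSet_Iic, heq, smul_eq_mul, mul_comm, sub_self]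
  have hg_ae : g =ᵐ[μ] 0 :=
    (integral_eq_zero_iff_of_nonneg (fun x => sub_nonneg.2 (indicator_le_max_sub_max q v x))
      (hdiff.sub hind)).1 hg_zero
  refine measure_mono_null (fun x hx => ?_) (ae_iff.1 hg_ae)
  exact (sub_pos.2 (indicator_lt_max_sub_max hx)).ne'

lemma measure_uIoo_pos_of_strictMono_cdf [IsProbabilityMeasure μ] (hF : StrictMono (cdf μ))
    {a b : ℝ} (hab : a ≠ b) :
    0 < μ (uIoo a b) := by
  obtain ⟨m, hm⟩ := nonempty_uIoo.2 hab
  have hIoc : Ioc (min a b) m ⊆ uIoo a b := fun x hx => ⟨hx.1, hx.2.trans_lt hm.2⟩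
  calc (0 : ENNReal) < ENNReal.ofReal (cdf μ m - cdf μ (min a b)) :=
        ENNReal.ofReal_pos.2 (sub_pos.2 (hF hm.1))
    _ = μ (Ioc (min a b) m) := by rw [← StieltjesFunction.measure_Ioc, measure_cdf]
    _ ≤ μ (uIoo a b) := measure_mono hIoc

theorem eq_of_ruObjective_eq [IsProbabilityMeasure μ] (hμ : Integrable id μ)
    (hF : StrictMono (cdf μ)) {τ q v : ℝ}
    (hτ : τ ≠ 0) (hq : cdf μ q = τ) (hv : ruObjective μ τ v = ruObjective μ τ q) :
    v = q := by
  rw [ruObjective, ruObjective, integral_const_sub_mul_max hμ, integral_const_sub_mul_max hμ] at hv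
  have heq : ∫ x, max (v - x) 0 ∂μ - ∫ x, max (q - x) 0 ∂μ = (v - q) * μ.real (Iic q) := by
    rw [← cdf_eq_real, hq]
    field_simp at hv
    linarith
  by_contra hne
  exact (measure_uIoo_pos_of_strictMono_cdf hF (Ne.symm hne)).ne'
    (measure_uIoo_eq_zero_of_integral_max_sub_max_eq hμ heq)

end

theorem var_recoverable_from_cvar_general
    {Ω : Type*} [MeasurableSpace Ω] (P : Measure Ω) [IsProbabilityMeasure P]
    (X : Ω → ℝ) (hX : Integrable X P)
    (F : ℝ → ℝ) (hF : ∀ x, F x = (P {ω | X ω ≤ x}).toReal)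
    (hFm : StrictMono F)
    (τ : ℝ) (hτ : τ ∈ Set.Ioo (0 : ℝ) 1)
    (q : ℝ) (hq : F q = τ)
    (h : ℝ → ℝ)
    (hh : ∀ y, h y = ∫ ω, (y - (1 / τ) * max (y - X ω) 0) ∂P)
    (v : ℝ) (hv : h v = h q) :
    v = q := by
  have hXm : AEMeasurable X P := hX.aemeasurable
  have : IsProbabilityMeasure (P.map X) := Measure.isProbabilityMeasure_map hXm
  have hcdf : cdf (P.map X) = F := funext fun x => by
    rw [cdf_eq_real, measureReal_def, Measure.map_apply_of_aemeasurable hXm measurableSet_Iic,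
      hF x]
    rfl
  have hh_law : ∀ y, h y = ruObjective (P.map X) τ y := fun y => by
    rw [hh y, ruObjective, integral_map hXm (by fun_prop)]
  refine eq_of_ruObjective_eq ((integrable_map_measure aestronglyMeasurable_id hXm).2 hX)
    (hcdf ▸ hFm) hτ.1.ne' (hcdf ▸ hq) ?_
  rwa [← hh_law, ← hh_law]

theorem var_recoverable_from_cvar
    {Ω : Type*} [MeasurableSpace Ω] (P : Measure Ω) [IsProbabilityMeasure P]
    (X : Ω → ℝ) (hX : Integrable X P)
    (F : ℝ → ℝ) (hF : ∀ x, F x = (P {ω | X ω ≤ x}).toReal)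
    (hFc : Continuous F) (hFm : StrictMono F)
    (τ : ℝ) (hτ : τ ∈ Set.Ioo (0 : ℝ) 1)
    (q : ℝ) (hq : F q = τ)
    (h : ℝ → ℝ)
    (hh : ∀ y, h y = ∫ ω, (y - (1 / τ) * max (y - X ω) 0) ∂P)
    (v : ℝ) (hv : h v = h q) :
    v = q :=
  var_recoverable_from_cvar_general P X hX F hF hFm τ hτ q hq h hh v hv
end

section
/- Let (Ω, P) be a probability space, let X : Ω → ℝ be an integrable random variable, let τ ∈ (0, 1), and let q ∈ ℝ satisfy P(X ≤ q) = τ and P(X = q) = 0. Define h(y) = ∫ ( y − (1/τ) · max(y − X(ω), 0) ) dP(ω). Then IsGreatest (Set.range h) ( (1/τ) · ∫_{ {ω : X(ω) ≤ q} } X(ω) dP(ω) ); that is, h(q) = (1/τ)·E[X·1_{X ≤ q}] and h(y) ≤ h(q) for all y ∈ ℝ. -/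
/-! The function `y ↦ (y - x)⁺` is convex with subgradient `1_{x ≤ q}` at `q`. Integrating the
subgradient inequality gives `E[(y - X)⁺] ≥ E[(q - X)⁺] + (y - q) τ` when `P(X ≤ q) = τ`, which
says exactly that `h y ≤ h q`; and on `{X ≤ q}` the positive part is just `q - X`, so `h q` is
`(1/τ) E[X 1_{X ≤ q}]`. -/

open MeasureTheory

namespace RockafellarUryasev

lemma max_sub_zero_add_ite_le (x q y : ℝ) :
    max (q - x) 0 + (if x ≤ q then y - q else 0) ≤ max (y - x) 0 := by
  split_ifs with hx
  · rw [max_eq_left (sub_nonneg.2 hx)]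
    linarith [le_max_left (y - x) 0]
  · rw [max_eq_right (by linarith), add_zero]
    exact le_max_right _ _

lemma max_sub_zero_eq_indicator {Ω : Type*} (X : Ω → ℝ) (q : ℝ) :
    (fun ω => max (q - X ω) 0) = {ω | X ω ≤ q}.indicator (fun ω => q - X ω) := by
  ext ω
  by_cases hω : X ω ≤ q
  · simp [hω]
  · simp [hω, (lt_of_not_ge hω).le]

variable {Ω : Type*} [MeasurableSpace Ω] {μ : Measure Ω} [IsFiniteMeasure μ] {X : Ω → ℝ}

lemma integrable_max_sub_zero (hX : Integrable X μ) (y : ℝ) :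
    Integrable (fun ω => max (y - X ω) 0) μ :=
  ((integrable_const y).sub hX).pos_part

theorem integral_max_sub_zero (hX : Integrable X μ) (q : ℝ) :
    ∫ ω, max (q - X ω) 0 ∂μ = q * μ.real {ω | X ω ≤ q} - ∫ ω in {ω | X ω ≤ q}, X ω ∂μ := by
  rw [max_sub_zero_eq_indicator,
    integral_indicator₀ (nullMeasurableSet_le hX.aemeasurable aemeasurable_const),
    integral_sub (integrable_const q).integrableOn hX.integrableOn, setIntegral_const,
    smul_eq_mul, mul_comm]

theorem integral_max_sub_zero_add_le (hX : Integrable X μ) (q y : ℝ) :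
    ∫ ω, max (q - X ω) 0 ∂μ + (y - q) * μ.real {ω | X ω ≤ q} ≤ ∫ ω, max (y - X ω) 0 ∂μ := by
  have hs : NullMeasurableSet {ω | X ω ≤ q} μ :=
    nullMeasurableSet_le hX.aemeasurable aemeasurable_const
  have hind : Integrable ({ω | X ω ≤ q}.indicator fun _ => y - q) μ :=
    (integrable_const _).indicator₀ hs
  rw [mul_comm, ← smul_eq_mul, ← setIntegral_const, ← integral_indicator₀ hs,
    ← integral_add (integrable_max_sub_zero hX q) hind]
  refine integral_mono ((integrable_max_sub_zero hX q).add hind)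
    (integrable_max_sub_zero hX y) fun ω => ?_
  simpa only [Pi.add_apply, Set.indicator_apply, Set.mem_ofPred_eq] using
    max_sub_zero_add_ite_le (X ω) q y

theorem integral_sub_mul_max_sub_zero [IsProbabilityMeasure μ] (hX : Integrable X μ) (c y : ℝ) :
    ∫ ω, (y - c * max (y - X ω) 0) ∂μ = y - c * ∫ ω, max (y - X ω) 0 ∂μ := by
  rw [integral_sub (integrable_const y) ((integrable_max_sub_zero hX y).const_mul c),
    integral_const, integral_const_mul, probReal_univ, one_smul]

end RockafellarUryasev

open RockafellarUryasev in
theorem rockafellar_uryasev_representation_general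
    {Ω : Type*} [MeasurableSpace Ω] (P : Measure Ω) [IsProbabilityMeasure P]
    (X : Ω → ℝ) (hX : Integrable X P)
    (τ : ℝ) (hτ : τ ∈ Set.Ioo (0 : ℝ) 1)
    (q : ℝ) (hq : P {ω | X ω ≤ q} = ENNReal.ofReal τ)
    (h : ℝ → ℝ)
    (hh : ∀ y, h y = ∫ ω, (y - (1 / τ) * max (y - X ω) 0) ∂P) :
    IsGreatest (Set.range h) ((1 / τ) * ∫ ω in {ω | X ω ≤ q}, X ω ∂P) := by
  obtain ⟨hτ0, -⟩ := hτ
  have hPq : P.real {ω | X ω ≤ q} = τ := by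
    rw [measureReal_def, hq, ENNReal.toReal_ofReal hτ0.le]
  have hh' (y : ℝ) : h y = y - (1 / τ) * ∫ ω, max (y - X ω) 0 ∂P := by
    rw [hh, integral_sub_mul_max_sub_zero hX]
  have hhq : h q = (1 / τ) * ∫ ω in {ω | X ω ≤ q}, X ω ∂P := by
    rw [hh', integral_max_sub_zero hX, hPq]
    field_simp
    ring
  refine ⟨⟨q, hhq⟩, ?_⟩
  rintro _ ⟨y, rfl⟩
  have hsub := integral_max_sub_zero_add_le hX q y
  rw [hPq] at hsub
  rw [← hhq, hh', hh', one_div]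
  have key : y - q ≤ τ⁻¹ * (∫ ω, max (y - X ω) 0 ∂P - ∫ ω, max (q - X ω) 0 ∂P) := by
    rw [le_inv_mul_iff₀ hτ0]
    linarith
  linarith

theorem rockafellar_uryasev_representation
    {Ω : Type*} [MeasurableSpace Ω] (P : Measure Ω) [IsProbabilityMeasure P]
    (X : Ω → ℝ) (hX : Integrable X P)
    (τ : ℝ) (hτ : τ ∈ Set.Ioo (0 : ℝ) 1)
    (q : ℝ) (hq : P {ω | X ω ≤ q} = ENNReal.ofReal τ)
    (hq0 : P {ω | X ω = q} = 0)
    (h : ℝ → ℝ)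
    (hh : ∀ y, h y = ∫ ω, (y - (1 / τ) * max (y - X ω) 0) ∂P) :
    IsGreatest (Set.range h) ((1 / τ) * ∫ ω in {ω | X ω ≤ q}, X ω ∂P) :=
  rockafellar_uryasev_representation_general P X hX τ hτ q hq h hh
end

section
/- Let μ be a probability measure on ℝ with finite first moment (∫ |x| dμ(x) < ∞), let F(x) = μ((−∞, x]) be its cumulative distribution function, and for u ∈ (0,1) define the quantile function Q(u) = sSup {x : ℝ | F(x) ≤ u}. Let τ ∈ (0, 1) and set q = Q(τ). If F is continuous at q, then ∫_{(0,τ)} Q(u) du = ∫_{(−∞, q]} x dμ(x), where the left-hand integral is with respect to Lebesgue measure on (0, τ). -/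
open MeasureTheory Filter Topology

theorem cvar_integral_eq_tail_expectation
    (μ : Measure ℝ) [IsProbabilityMeasure μ]
    (hμ : Integrable (fun x : ℝ => x) μ)
    (F : ℝ → ℝ) (hF : ∀ x, F x = (μ (Set.Iic x)).toReal)
    (Q : ℝ → ℝ) (hQ : ∀ u, Q u = sSup {x : ℝ | F x ≤ u})
    (τ : ℝ) (hτ : τ ∈ Set.Ioo (0 : ℝ) 1)
    (q : ℝ) (hq : q = Q τ)
    (hcont : ContinuousAt F q) :
    ∫ u in Set.Ioo (0 : ℝ) τ, Q u = ∫ x in Set.Iic q, x ∂μ := by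
  obtain ⟨hτ0, hτ1⟩ := hτ
  -- basic facts about F
  have Fmono : Monotone F := fun a b hab => by
    rw [hF, hF]
    exact ENNReal.toReal_mono (measure_ne_top μ _)
      (measure_mono (Set.Iic_subset_Iic.2 hab))
  have Fnn : ∀ x, 0 ≤ F x := fun x => by rw [hF]; exact ENNReal.toReal_nonneg
  have hseq : Tendsto (fun n : ℕ => (1 : ℝ) / (n + 1)) atTop (𝓝 0) :=
    tendsto_one_div_add_atTop_nhds_zero_nat
  -- right continuity of F (along a sequence)
  have Frc : ∀ x : ℝ, Tendsto (fun n : ℕ => F (x + 1 / (n + 1))) atTop (𝓝 (F x)) := by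
    intro x
    have hmes : Tendsto (fun n : ℕ => μ (Set.Iic (x + 1 / (n + 1)))) atTop
        (𝓝 (μ (⋂ n : ℕ, Set.Iic (x + 1 / ((n : ℝ) + 1))))) := by
      refine tendsto_measure_iInter_atTop
        (fun n => measurableSet_Iic.nullMeasurableSet) ?_ ⟨0, measure_ne_top μ _⟩
      intro m n hmn
      have h1 : (1:ℝ)/((n:ℝ)+1) ≤ 1/((m:ℝ)+1) := by
        apply one_div_le_one_div_of_le
        · positivity
        · have : (m:ℝ) ≤ (n:ℝ) := by exact_mod_cast hmn
          linarith
      exact Set.Iic_subset_Iic.2 (by linarith)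
    have hInter : (⋂ n : ℕ, Set.Iic (x + 1 / ((n : ℝ) + 1))) = Set.Iic x := by
      ext y
      simp only [Set.mem_iInter, Set.mem_Iic]
      constructor
      · intro hy
        have hx : Tendsto (fun n : ℕ => x + 1 / ((n : ℝ) + 1)) atTop (𝓝 x) := by
          simpa using tendsto_const_nhds.add hseq
        exact ge_of_tendsto hx (Eventually.of_forall hy)
      · intro hy n
        have : (0:ℝ) < 1 / ((n : ℝ) + 1) := by positivity
        linarith
    rw [hInter] at hmes
    have := (ENNReal.tendsto_toReal (measure_ne_top μ (Set.Iic x))).comp hmes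
    simpa only [Function.comp_def, ← hF] using this
  have Fle : ∀ u x : ℝ, (∀ z, x < z → u < F z) → u ≤ F x := by
    intro u x h
    refine ge_of_tendsto (Frc x) (Eventually.of_forall fun n => ?_)
    exact (h _ (lt_add_of_pos_right x (by positivity))).le
  -- F tends to 0 at -∞ : values below any u > 0
  have hex_lt : ∀ u : ℝ, 0 < u → ∃ x, F x < u := by
    intro u hu
    have hmes : Tendsto (fun n : ℕ => μ (Set.Iic (-(n : ℝ)))) atTop
        (𝓝 (μ (⋂ n : ℕ, Set.Iic (-(n : ℝ))))) := by
      refine tendsto_measure_iInter_atTop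
        (fun n => measurableSet_Iic.nullMeasurableSet) ?_ ⟨0, measure_ne_top μ _⟩
      intro m n hmn
      exact Set.Iic_subset_Iic.2 (by exact_mod_cast neg_le_neg (by exact_mod_cast hmn))
    have hInter : (⋂ n : ℕ, Set.Iic (-(n : ℝ))) = ∅ := by
      ext y
      simp only [Set.mem_iInter, Set.mem_Iic, Set.mem_empty_iff_false, iff_false, not_forall]
      obtain ⟨n, hn⟩ := exists_nat_gt (-y)
      exact ⟨n, by push_neg; linarith⟩
    rw [hInter, measure_empty] at hmes
    have h0 := (ENNReal.tendsto_toReal (by simp)).comp hmes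
    simp only [Function.comp_def, ENNReal.toReal_zero] at h0
    have := h0.eventually (eventually_lt_nhds hu)
    obtain ⟨n, hn⟩ := this.exists
    exact ⟨-(n : ℝ), by rw [hF]; exact hn⟩
  -- F tends to 1 at +∞ : values above any u < 1
  have hex_gt : ∀ u : ℝ, u < 1 → ∃ x, u < F x := by
    intro u hu
    have hmes : Tendsto (fun n : ℕ => μ (Set.Iic (n : ℝ))) atTop
        (𝓝 (μ (⋃ n : ℕ, Set.Iic (n : ℝ)))) := by
      exact tendsto_measure_iUnion_atTop
        (fun m n hmn => Set.Iic_subset_Iic.2 (by exact_mod_cast hmn))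
    have hUnion : (⋃ n : ℕ, Set.Iic (n : ℝ)) = Set.univ := by
      ext y
      simp only [Set.mem_iUnion, Set.mem_Iic, Set.mem_univ, iff_true]
      obtain ⟨n, hn⟩ := exists_nat_gt y
      exact ⟨n, hn.le⟩
    rw [hUnion, measure_univ] at hmes
    have h1 := (ENNReal.tendsto_toReal (by simp)).comp hmes
    simp only [Function.comp_def, ENNReal.toReal_one] at h1
    have := h1.eventually (eventually_gt_nhds hu)
    obtain ⟨n, hn⟩ := this.exists
    exact ⟨(n : ℝ), by rw [hF]; exact hn⟩
  -- the sublevel sets of F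
  have hne : ∀ u : ℝ, 0 < u → {x : ℝ | F x ≤ u}.Nonempty := fun u hu =>
    let ⟨x, hx⟩ := hex_lt u hu; ⟨x, hx.le⟩
  have hbdd : ∀ u : ℝ, u < 1 → BddAbove {x : ℝ | F x ≤ u} := by
    intro u hu
    obtain ⟨x, hx⟩ := hex_gt u hu
    refine ⟨x, fun y hy => ?_⟩
    by_contra h
    push_neg at h
    exact absurd (le_trans (Fmono h.le) hy) (not_le.2 hx)
  have hQle : ∀ u x : ℝ, 0 < u → u < F x → Q u ≤ x := by
    intro u x hu hux
    rw [hQ]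
    refine csSup_le (hne u hu) fun y hy => ?_
    by_contra h
    push_neg at h
    exact absurd (le_trans (Fmono h.le) hy) (not_le.2 hux)
  have hFQ : ∀ u x : ℝ, u < 1 → Q u ≤ x → u ≤ F x := by
    intro u x hu h
    refine Fle u x fun z hz => ?_
    by_contra h'
    push_neg at h'
    have : z ≤ Q u := by rw [hQ]; exact le_csSup (hbdd u hu) h'
    exact absurd (this.trans h) (not_le.2 hz)
  have hQmono : MonotoneOn Q (Set.Ioo (0 : ℝ) τ) := by
    intro a ha b hb hab
    rw [hQ, hQ]
    exact csSup_le_csSup (hbdd b (hb.2.trans hτ1)) (hne a ha.1)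
      (fun x hx => le_trans hx hab)
  -- F q = τ
  have hFq_ge : τ ≤ F q := hFQ τ q hτ1 (hq ▸ le_rfl)
  have hlt_q : ∀ x, x < q → F x ≤ τ := by
    intro x hx
    rw [hq, hQ] at hx
    obtain ⟨y, hy, hxy⟩ := exists_lt_of_lt_csSup (hne τ hτ0) hx
    exact le_trans (Fmono hxy.le) hy
  have hFq_le : F q ≤ τ := by
    have hx : Tendsto (fun n : ℕ => q - 1 / ((n : ℝ) + 1)) atTop (𝓝 q) := by
      simpa using tendsto_const_nhds.sub hseq
    have hFr : Tendsto (fun n : ℕ => F (q - 1 / ((n : ℝ) + 1))) atTop (𝓝 (F q)) :=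
      (hcont.tendsto).comp hx
    refine le_of_tendsto hFr (Eventually.of_forall fun n => ?_)
    have hpos : (0:ℝ) < 1 / ((n : ℝ) + 1) := by positivity
    exact hlt_q _ (by linarith)
  have hFq : F q = τ := le_antisymm hFq_le hFq_ge
  -- measurability of Q
  have hQmeas : AEMeasurable Q (volume.restrict (Set.Ioo (0 : ℝ) τ)) :=
    aemeasurable_restrict_of_monotoneOn measurableSet_Ioo hQmono
  -- the measure of Iic m
  have hμIic : ∀ m : ℝ, μ (Set.Iic m) = ENNReal.ofReal (F m) := by
    intro m
    rw [hF, ENNReal.ofReal_toReal (measure_ne_top μ _)]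
  -- the pushforward identity
  have hmap : Measure.map Q (volume.restrict (Set.Ioo (0 : ℝ) τ)) =
      μ.restrict (Set.Iic q) := by
    have hfin : IsFiniteMeasure (Measure.map Q (volume.restrict (Set.Ioo (0 : ℝ) τ))) := by
      constructor
      rw [Measure.map_apply_of_aemeasurable hQmeas MeasurableSet.univ, Set.preimage_univ,
        Measure.restrict_apply_univ]
      exact lt_of_le_of_lt (le_refl _) (by rw [Real.volume_Ioo]; exact ENNReal.ofReal_lt_top)
    refine Measure.ext_of_Iic _ _ fun x => ?_
    rw [Measure.map_apply_of_aemeasurable hQmeas measurableSet_Iic,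
      Measure.restrict_apply' measurableSet_Ioo,
      Measure.restrict_apply measurableSet_Iic]
    have hlhs : volume (Q ⁻¹' Set.Iic x ∩ Set.Ioo (0 : ℝ) τ)
        = ENNReal.ofReal (min (F x) τ) := by
      apply le_antisymm
      · have hsub : Q ⁻¹' Set.Iic x ∩ Set.Ioo (0 : ℝ) τ ⊆ Set.Ioc 0 (min (F x) τ) := by
          rintro u ⟨hu1, hu2⟩
          refine ⟨hu2.1, le_min (hFQ u x (hu2.2.trans hτ1) hu1) hu2.2.le⟩
        calc volume (Q ⁻¹' Set.Iic x ∩ Set.Ioo (0 : ℝ) τ)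
            ≤ volume (Set.Ioc 0 (min (F x) τ)) := measure_mono hsub
          _ = ENNReal.ofReal (min (F x) τ) := by rw [Real.volume_Ioc, sub_zero]
      · have hsub : Set.Ioo 0 (min (F x) τ) ⊆ Q ⁻¹' Set.Iic x ∩ Set.Ioo (0 : ℝ) τ := by
          rintro u ⟨hu1, hu2⟩
          have hux : u < F x := hu2.trans_le (min_le_left _ _)
          have huτ : u < τ := hu2.trans_le (min_le_right _ _)
          exact ⟨hQle u x hu1 hux, hu1, huτ⟩
        calc ENNReal.ofReal (min (F x) τ) = volume (Set.Ioo 0 (min (F x) τ)) := by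
              rw [Real.volume_Ioo, sub_zero]
          _ ≤ volume (Q ⁻¹' Set.Iic x ∩ Set.Ioo (0 : ℝ) τ) := measure_mono hsub
    rw [hlhs, Set.Iic_inter_Iic, hμIic]
    congr 1
    rcases le_total x q with h | h
    · rw [min_eq_left h, min_eq_left (le_trans (by rw [← hFq]; exact Fmono h) le_rfl)]
    · rw [min_eq_right h, hFq, min_eq_right (by rw [← hFq]; exact Fmono h)]
  -- conclude via the change of variables formula
  calc ∫ u in Set.Ioo (0 : ℝ) τ, Q u
      = ∫ y, y ∂(Measure.map Q (volume.restrict (Set.Ioo (0 : ℝ) τ))) :=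
        (integral_map hQmeas aestronglyMeasurable_id).symm
    _ = ∫ x in Set.Iic q, x ∂μ := by rw [hmap]
end
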